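/- arXiv:1404.1342 — 3 statements merged into one kernel-verified Lean document; each statement's English description precedes it below -/
import Mathlib

section
/- Let θ, η be n×n complex matrices with θ² = 0 and η² = 0. Then for every j ≥ 1, tr((θ + η)^(2j+1)) = 0. -/
/-- For `n×n` complex matrices `θ, η` with `θ² = 0` and `η² = 0`,
`tr((θ + η)^(2j+1)) = 0` for every `j ≥ 1`. -/
theorem stmt1 {n : ℕ} (θ η : Matrix (Fin n) (Fin n) ℂ)
    (hθ : θ * θ = 0) (hη : η * η = 0) :
    ∀ j : ℕ, 1 ≤ j → Matrix.trace ((θ + η) ^ (2 * j + 1)) = 0 := by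
  have hθ' : ∀ x : Matrix (Fin n) (Fin n) ℂ, θ * (θ * x) = 0 := fun x => by
    rw [← mul_assoc, hθ, zero_mul]
  have hη' : ∀ x : Matrix (Fin n) (Fin n) ℂ, η * (η * x) = 0 := fun x => by
    rw [← mul_assoc, hη, zero_mul]
  have hsq : (θ + η) * (θ + η) = θ * η + η * θ := by
    simp [mul_add, add_mul, hθ, hη]; abel
  have key : ∀ j : ℕ, (θ + η) ^ (2 * (j + 1) + 1)
      = (θ * η) ^ (j + 1) * θ + (η * θ) ^ (j + 1) * η := by
    intro j
    induction j with
    | zero =>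
      show (θ + η) ^ 3 = _
      rw [pow_succ, sq, hsq]
      simp [mul_add, add_mul, hθ, hη, mul_assoc, hθ', hη']
    | succ k ih =>
      have h2 : 2 * (k + 1 + 1) + 1 = 2 + (2 * (k + 1) + 1) := by ring
      rw [h2, pow_add, sq, hsq, ih, mul_add, add_mul, add_mul]
      have e1 : θ * η * ((η * θ) ^ (k + 1) * η) = 0 := by
        rw [pow_succ']
        simp [mul_assoc, hη', hθ']
      have e2 : η * θ * ((θ * η) ^ (k + 1) * θ) = 0 := by
        rw [pow_succ']
        simp [mul_assoc, hη', hθ']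
      rw [e1, e2, add_zero, zero_add]
      rw [pow_succ' (θ * η) (k+1), pow_succ' (η * θ) (k+1)]
      simp [mul_assoc]
  intro j hj
  obtain ⟨k, rfl⟩ := Nat.exists_eq_add_of_le hj
  rw [add_comm 1 k, key k, Matrix.trace_add, Matrix.trace_mul_comm, Matrix.trace_mul_comm _ η]
  have h1 : θ * (θ * η) ^ (k + 1) = 0 := by rw [pow_succ', mul_assoc, hθ']
  have h2 : η * (η * θ) ^ (k + 1) = 0 := by rw [pow_succ', mul_assoc, hη']
  rw [h1, h2]; simp
end

section
/- Let θ, η be n×n complex matrices with θ² = 0. Then for every k ≥ 1, tr((θη - ηθ)^k · θ) = 0, where the commutator is [θ,η] = θη - ηθ. -/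
/-- For `n×n` complex matrices `θ, η` with `θ² = 0`,
`tr([θ,η]^k · θ) = 0` for every `k ≥ 1`, where `[θ,η] = θη − ηθ`. -/
theorem stmt2 {n : ℕ} (θ η : Matrix (Fin n) (Fin n) ℂ) (hθ : θ * θ = 0) :
    ∀ k : ℕ, 1 ≤ k → Matrix.trace ((θ * η - η * θ) ^ k * θ) = 0 := by
  set c : Matrix (Fin n) (Fin n) ℂ := θ * η - η * θ with hc
  have hanti : θ * c = -(c * θ) := by
    have : θ * c + c * θ = θ * θ * η - η * (θ * θ) := by
      rw [hc]; noncomm_ring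
    rw [hθ] at this
    simp at this
    linear_combination (norm := noncomm_ring) this
  have hpow : ∀ m : ℕ, θ * c ^ m = (-1 : ℂ) ^ m • (c ^ m * θ) := by
    intro m
    induction m with
    | zero => simp
    | succ m ih =>
      rw [pow_succ, ← mul_assoc, ih, smul_mul_assoc, mul_assoc, hanti]
      simp [pow_succ, mul_assoc, mul_neg, smul_smul]
  have hcθ : c * θ = θ * η * θ := by
    rw [hc]; rw [sub_mul, mul_assoc η θ θ, hθ]; simp
  intro k hk
  obtain ⟨m, rfl⟩ := Nat.exists_eq_add_of_le hk
  rw [add_comm, pow_succ, mul_assoc, hcθ]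
  rw [← mul_assoc, ← mul_assoc]
  rw [Matrix.trace_mul_comm]
  rw [← mul_assoc, ← mul_assoc, hpow, smul_mul_assoc, smul_mul_assoc]
  rw [mul_assoc _ θ θ, hθ]
  simp
end

section
/- Let θ be an n×n matrix of complex-valued (1,0)-forms on a complex manifold (or more generally, entries in the degree-1 part of a graded-commutative algebra) with θ ∧ θ = 0, and let η = θ* (conjugate transpose of entries). Then tr((θ + η)^(2j+1)) = 0 for all j ≥ 1, where powers are taken with respect to the wedge-matrix product. -/
open Matrix

/-- Trace cyclicity when entries of the two matrices pairwise commute. -/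
lemma trace_mul_comm_of_commute {n : ℕ} {Λ : Type*} [Ring Λ]
    (A B : Matrix (Fin n) (Fin n) Λ)
    (h : ∀ i j k l, A i j * B k l = B k l * A i j) :
    Matrix.trace (A * B) = Matrix.trace (B * A) := by
  simp only [Matrix.trace, Matrix.diag, Matrix.mul_apply]
  rw [Finset.sum_comm]
  exact Finset.sum_congr rfl fun i _ => Finset.sum_congr rfl fun k _ => h k i i k

/-- Let `θ` be an `n×n` matrix with entries in the degree-one (odd) part of a
graded-commutative `ℂ`-algebra `Λ` — so that any two entries of `θ` and of
`η = θ*` anticommute — with `θ ∧ θ = 0` and `η ∧ η = 0`.  Then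
`tr((θ + η)^(2j+1)) = 0` for all `j ≥ 1`, powers being wedge-matrix products. -/
theorem stmt8 {n : ℕ} {Λ : Type*} [Ring Λ] [Algebra ℂ Λ]
    (θ η : Matrix (Fin n) (Fin n) Λ)
    -- all entries of `θ` and `η` are odd, hence pairwise anticommute:
    (hodd : ∀ x ∈ {x : Λ | ∃ i j, x = θ i j ∨ x = η i j},
            ∀ y ∈ {x : Λ | ∃ i j, x = θ i j ∨ x = η i j}, x * y = -(y * x))
    (hθ : θ * θ = 0) (hη : η * η = 0) :
    ∀ j : ℕ, 1 ≤ j → Matrix.trace ((θ + η) ^ (2 * j + 1)) = 0 := by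
  set S : Set Λ := {x : Λ | ∃ i j, x = θ i j ∨ x = η i j} with hS
  -- products of two odd entries commute with odd entries
  have pair_central : ∀ a ∈ S, ∀ b ∈ S, a * b ∈ Set.centralizer S := by
    intro a ha b hb z hz
    have h1 : z * a = -(a * z) := hodd z hz a ha
    have h2 : z * b = -(b * z) := hodd z hz b hb
    calc z * (a * b) = (z * a) * b := by rw [mul_assoc]
      _ = -(a * (z * b)) := by rw [h1, neg_mul, mul_assoc]
      _ = a * (b * z) := by rw [h2, mul_neg, neg_neg]
      _ = a * b * z := by rw [mul_assoc]
  -- membership of entries in the subring closure of S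
  have hθS : ∀ i j, θ i j ∈ Subring.closure S :=
    fun i j => Subring.subset_closure ⟨i, j, Or.inl rfl⟩
  have hηS : ∀ i j, η i j ∈ Subring.closure S :=
    fun i j => Subring.subset_closure ⟨i, j, Or.inr rfl⟩
  have hmulS : ∀ (A B : Matrix (Fin n) (Fin n) Λ),
      (∀ i j, A i j ∈ Subring.closure S) → (∀ i j, B i j ∈ Subring.closure S) →
      ∀ i j, (A * B) i j ∈ Subring.closure S := by
    intro A B hA hB i j
    rw [Matrix.mul_apply]
    exact Subring.sum_mem _ fun k _ => Subring.mul_mem _ (hA i k) (hB k j)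
  -- entries of θ*η and η*θ lie in the centralizer of S
  have hθηC : ∀ i j, (θ * η) i j ∈ Set.centralizer S := by
    intro i j
    rw [Matrix.mul_apply]
    have : (∑ k, θ i k * η k j) ∈ Subring.centralizer S :=
      Subring.sum_mem _ fun k _ => pair_central _ ⟨i, k, Or.inl rfl⟩ _ ⟨k, j, Or.inr rfl⟩
    exact this
  have hηθC : ∀ i j, (η * θ) i j ∈ Set.centralizer S := by
    intro i j
    rw [Matrix.mul_apply]
    have : (∑ k, η i k * θ k j) ∈ Subring.centralizer S :=
      Subring.sum_mem _ fun k _ => pair_central _ ⟨i, k, Or.inr rfl⟩ _ ⟨k, j, Or.inl rfl⟩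
    exact this
  -- commutation between closure-of-S elements and centralizer-of-S elements
  have hcommEl : ∀ x ∈ Subring.closure S, ∀ y ∈ Set.centralizer S, x * y = y * x := by
    intro x hx y hy
    have := Subring.closure_le_centralizer_centralizer S hx
    exact (Subring.mem_centralizer_iff.mp this y hy).symm
  -- the basic matrix algebra
  obtain ⟨Φ, hΦ⟩ : ∃ Φ : Matrix (Fin n) (Fin n) Λ, Φ = θ * η + η * θ := ⟨_, rfl⟩
  have hA2 : (θ + η) * (θ + η) = Φ := by
    rw [add_mul, mul_add, mul_add, hθ, hη, hΦ]; abel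
  have hΦθ : Φ * θ = θ * η * θ := by
    rw [hΦ, add_mul, mul_assoc η θ θ, hθ, mul_zero, add_zero]
  have hθΦ : θ * Φ = θ * η * θ := by
    rw [hΦ, mul_add, ← mul_assoc θ θ η, hθ, zero_mul, zero_add, mul_assoc]
  have hΦη : Φ * η = η * θ * η := by
    rw [hΦ, add_mul, mul_assoc θ η η, hη, mul_zero, zero_add]
  have hηΦ : η * Φ = η * θ * η := by
    rw [hΦ, mul_add, ← mul_assoc η η θ, hη, zero_mul, add_zero, mul_assoc]
  have hΦA : Φ * (θ + η) = (θ + η) * Φ :=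
    calc Φ * (θ + η) = Φ * θ + Φ * η := mul_add _ _ _
      _ = θ * Φ + η * Φ := by rw [hΦθ, hΦη, ← hθΦ, ← hηΦ]
      _ = (θ + η) * Φ := (add_mul _ _ _).symm
  have hΦkθ : ∀ k : ℕ, Φ ^ k * θ = θ * Φ ^ k := by
    intro k
    induction k with
    | zero => simp
    | succ k ih =>
      rw [pow_succ, mul_assoc, hΦθ, ← hθΦ, ← mul_assoc, ih, mul_assoc]
  have hΦkη : ∀ k : ℕ, Φ ^ k * η = η * Φ ^ k := by
    intro k
    induction k with
    | zero => simp
    | succ k ih =>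
      rw [pow_succ, mul_assoc, hΦη, ← hηΦ, ← mul_assoc, ih, mul_assoc]
  -- the power formula
  have hpow : ∀ j : ℕ, (θ + η) ^ (2 * j + 1) = Φ ^ j * (θ + η) := by
    intro j
    induction j with
    | zero => simp
    | succ j ih =>
      have : 2 * (j + 1) + 1 = (2 * j + 1) + 2 := by ring
      rw [this, pow_add, ih, pow_two, hA2, pow_succ,
        mul_assoc (Φ ^ j) (θ + η) Φ, ← hΦA, ← mul_assoc]
  -- entries of Φ^k * θ and Φ^k * η are in the closure
  have hΦS : ∀ i j, Φ i j ∈ Subring.closure S := by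
    intro i j
    rw [hΦ]
    exact Subring.add_mem _ (hmulS θ η hθS hηS i j) (hmulS η θ hηS hθS i j)
  have hΦkS : ∀ k : ℕ, ∀ i j, (Φ ^ k) i j ∈ Subring.closure S := by
    intro k
    induction k with
    | zero =>
      intro i j
      rw [pow_zero]
      by_cases h : i = j
      · subst h; rw [Matrix.one_apply_eq]; exact Subring.one_mem _
      · rw [Matrix.one_apply_ne h]; exact Subring.zero_mem _
    | succ k ih =>
      intro i j
      rw [pow_succ]
      exact hmulS _ _ ih hΦS i j
  -- vanishing of tr(Φ^(k+1) * θ)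
  have hvθ : ∀ k : ℕ, Matrix.trace (Φ ^ (k + 1) * θ) = 0 := by
    intro k
    have e1 : Φ ^ (k + 1) * θ = (Φ ^ k * θ) * (η * θ) := by
      rw [pow_succ, mul_assoc, hΦθ, ← mul_assoc, ← mul_assoc, ← mul_assoc, hΦkθ]
    rw [e1, trace_mul_comm_of_commute _ _
      (fun i j k' l => hcommEl _ (hmulS _ _ (hΦkS k) hθS i j) _ (hηθC k' l))]
    have e2 : (η * θ) * (Φ ^ k * θ) = 0 := by
      rw [hΦkθ, mul_assoc η θ (θ * Φ ^ k), ← mul_assoc θ θ (Φ ^ k), hθ, zero_mul, mul_zero]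
    rw [e2, Matrix.trace_zero]
  -- vanishing of tr(Φ^(k+1) * η)
  have hvη : ∀ k : ℕ, Matrix.trace (Φ ^ (k + 1) * η) = 0 := by
    intro k
    have e1 : Φ ^ (k + 1) * η = (Φ ^ k * η) * (θ * η) := by
      rw [pow_succ, mul_assoc, hΦη, ← mul_assoc, ← mul_assoc, ← mul_assoc, hΦkη]
    rw [e1, trace_mul_comm_of_commute _ _
      (fun i j k' l => hcommEl _ (hmulS _ _ (hΦkS k) hηS i j) _ (hθηC k' l))]
    have e2 : (θ * η) * (Φ ^ k * η) = 0 := by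
      rw [hΦkη, mul_assoc θ η (η * Φ ^ k), ← mul_assoc η η (Φ ^ k), hη, zero_mul, mul_zero]
    rw [e2, Matrix.trace_zero]
  intro j hj
  obtain ⟨k, rfl⟩ : ∃ k, j = k + 1 := ⟨j - 1, (Nat.succ_pred_eq_of_pos hj).symm⟩
  rw [hpow, mul_add, Matrix.trace_add, hvθ, hvη, add_zero]
end
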